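/- Let (M,d) be a pseudometric space, N a finite nonempty set of agents and A a finite nonempty set of alternatives (points of M). Let top : N → A satisfy d(i,x) ≤ d(i, top(i)) for every agent i and every alternative x (top(i) is a farthest alternative from i). Let w ∈ A and suppose there is a bijection μ : N → N such that d(i, top(μ(i))) ≤ d(i, w) for every agent i (the domination graph of w attains a perfect matching). Then for every alternative o ∈ A, Σ_{i∈N} d(i,o) ≤ 3 · Σ_{i∈N} d(i,w). -/
import Mathlib


/-- Centralized obnoxious metric voting: any winner whose domination
graph attains a perfect matching has distortion at most 3. -/
theorem domination_matching_distortion_three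
    {M ι : Type*} [PseudoMetricSpace M]
    (N : Finset ι) (hN : N.Nonempty) (loc : ι → M)
    (A : Finset M) (hA : A.Nonempty)
    (top : ι → M) (htopA : ∀ i ∈ N, top i ∈ A)
    (htop : ∀ i ∈ N, ∀ x ∈ A, dist (loc i) x ≤ dist (loc i) (top i))
    (w : M) (hwA : w ∈ A)
    (μ : ι → ι) (hμ : Set.BijOn μ ↑N ↑N)
    (hdom : ∀ i ∈ N, dist (loc i) (top (μ i)) ≤ dist (loc i) w)
    (o : M) (ho : o ∈ A) :
    ∑ i ∈ N, dist (loc i) o ≤ 3 * ∑ i ∈ N, dist (loc i) w := by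
  have hmem : ∀ j ∈ N, μ j ∈ N := fun j hj => hμ.mapsTo hj
  have key : ∀ j ∈ N, dist (loc (μ j)) o ≤ dist (loc (μ j)) w + 2 * dist (loc j) w := by
    intro j hj
    have hμj := hmem j hj
    have h1 : dist (loc (μ j)) o ≤ dist (loc (μ j)) (top (μ j)) := htop _ hμj o ho
    have h2 : dist (loc (μ j)) (top (μ j)) ≤ dist (loc (μ j)) w + dist w (top (μ j)) :=
      dist_triangle _ _ _
    have h3 : dist w (top (μ j)) ≤ dist w (loc j) + dist (loc j) (top (μ j)) :=
      dist_triangle _ _ _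
    have h4 : dist (loc j) (top (μ j)) ≤ dist (loc j) w := hdom j hj
    have h5 : dist w (loc j) = dist (loc j) w := dist_comm _ _
    linarith
  have hre : ∑ i ∈ N, dist (loc i) o = ∑ j ∈ N, dist (loc (μ j)) o :=
    (Finset.sum_bij (fun j _ => μ j) (fun j hj => hmem j hj)
      (fun a ha b hb h => hμ.injOn ha hb h)
      (fun b hb => by
        obtain ⟨a, ha, hab⟩ := hμ.surjOn hb
        exact ⟨a, ha, hab⟩)
      (fun a ha => rfl)).symm
  have hre2 : ∑ j ∈ N, dist (loc (μ j)) w = ∑ i ∈ N, dist (loc i) w :=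
    Finset.sum_bij (fun j _ => μ j) (fun j hj => hmem j hj)
      (fun a ha b hb h => hμ.injOn ha hb h)
      (fun b hb => by
        obtain ⟨a, ha, hab⟩ := hμ.surjOn hb
        exact ⟨a, ha, hab⟩)
      (fun a ha => rfl)
  calc ∑ i ∈ N, dist (loc i) o = ∑ j ∈ N, dist (loc (μ j)) o := hre
    _ ≤ ∑ j ∈ N, (dist (loc (μ j)) w + 2 * dist (loc j) w) := Finset.sum_le_sum key
    _ = (∑ j ∈ N, dist (loc (μ j)) w) + 2 * ∑ j ∈ N, dist (loc j) w := by
        rw [Finset.sum_add_distrib, Finset.mul_sum]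
    _ = 3 * ∑ i ∈ N, dist (loc i) w := by rw [hre2]; ring
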